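/- Rigidity of the volume-element ratio (analytic core of the equality discussion): let k > 1 be a real number, H > 0, and let θ : [0,∞) → (0,∞) be nonincreasing. Define A(t) = θ(t) · (1 + H t/(k−1))^{k−1}. If liminf_{R→∞} (k / R^k) · ∫₀^R A(t) dt ≥ θ(0) · (H/(k−1))^{k−1}, then θ(t) = θ(0) for all t ≥ 0; equivalently, A(t) = θ(0) · (1 + H t/(k−1))^{k−1} for all t ≥ 0. -/

import Mathlib

open Filter intervalIntegral Set Topology

/-!
With `c = H/(k-1)`, the weight `w t = (1 + c t)^(k-1)` satisfies
`(k/R^k) ∫₀^R w → c^(k-1)`. For any `t₀ ≥ 0`, monotonicity of `θ` gives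
`∫₀^R θ w ≤ (θ 0 - θ t₀) ∫₀^t₀ w + θ t₀ ∫₀^R w`; the first term is a constant, killed by the
factor `k/R^k`, so the liminf is at most `θ t₀ c^(k-1)`. The hypothesis then forces
`θ 0 ≤ θ t₀`.
-/

theorem integral_one_add_mul_rpow {c k : ℝ} (hc : c ≠ 0) (hk : 0 < k) (R : ℝ) :
    ∫ t in (0 : ℝ)..R, (1 + c * t) ^ (k - 1) = ((1 + c * R) ^ k - 1) / (c * k) := by
  rw [integral_comp_add_mul (fun x : ℝ => x ^ (k - 1)) hc,
    integral_rpow (Or.inl (by linarith)), mul_zero, add_zero, sub_add_cancel, Real.one_rpow,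
    smul_eq_mul]
  field_simp

theorem tendsto_div_rpow_mul_integral_one_add_mul_rpow {c k : ℝ} (hc : 0 < c) (hk : 0 < k) :
    Tendsto (fun R : ℝ => k / R ^ k * ∫ t in (0 : ℝ)..R, (1 + c * t) ^ (k - 1)) atTop
      (𝓝 (c ^ (k - 1))) := by
  have hbase : Tendsto (fun R : ℝ => R⁻¹ + c) atTop (𝓝 c) := by
    simpa using tendsto_inv_atTop_zero.add_const c
  have hlim := ((hbase.rpow_const (p := k) (Or.inl hc.ne')).div_const c).sub
    ((tendsto_rpow_atTop hk).inv_tendsto_atTop.div_const c)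
  rw [zero_div, sub_zero, ← Real.rpow_sub_one hc.ne'] at hlim
  refine hlim.congr' ?_
  filter_upwards [eventually_gt_atTop 0] with R hR
  have hinv : R⁻¹ + c = (1 + c * R) / R := by field_simp
  simp only [Pi.inv_apply]
  rw [integral_one_add_mul_rpow hc.ne' hk, hinv, Real.div_rpow (by positivity) hR.le]
  field_simp

theorem integral_mul_le_of_antitoneOn {θ w : ℝ → ℝ} {a b t₀ : ℝ}
    (hθ : AntitoneOn θ (Icc a b)) (hw : ContinuousOn w (Icc a b))
    (hw0 : ∀ t ∈ Icc a b, 0 ≤ w t) (hat₀ : a ≤ t₀) (ht₀b : t₀ ≤ b) :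
    ∫ t in a..b, θ t * w t ≤ (θ a - θ t₀) * (∫ t in a..t₀, w t) + θ t₀ * ∫ t in a..b, w t := by
  have hsub₁ : uIcc a t₀ ⊆ Icc a b := by rw [uIcc_of_le hat₀]; exact Icc_subset_Icc_right ht₀b
  have hsub₂ : uIcc t₀ b ⊆ Icc a b := by rw [uIcc_of_le ht₀b]; exact Icc_subset_Icc_left hat₀
  have hint : ∀ {s u}, uIcc s u ⊆ Icc a b →
      IntervalIntegrable w MeasureTheory.volume s u ∧
        IntervalIntegrable (fun t => θ t * w t) MeasureTheory.volume s u :=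
    fun h => ⟨(hw.mono h).intervalIntegrable,
      ((hθ.mono h).intervalIntegrable).mul_continuousOn (hw.mono h)⟩
  have hleft : ∫ t in a..t₀, θ t * w t ≤ θ a * ∫ t in a..t₀, w t := by
    rw [← integral_const_mul]
    refine integral_mono_on hat₀ (hint hsub₁).2 ((hint hsub₁).1.const_mul _) fun t ht => ?_
    have ht' : t ∈ Icc a b := hsub₁ (Icc_subset_uIcc ht)
    exact mul_le_mul_of_nonneg_right (hθ (left_mem_Icc.2 (hat₀.trans ht₀b)) ht' ht.1) (hw0 t ht')
  have hright : ∫ t in t₀..b, θ t * w t ≤ θ t₀ * ∫ t in t₀..b, w t := by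
    rw [← integral_const_mul]
    refine integral_mono_on ht₀b (hint hsub₂).2 ((hint hsub₂).1.const_mul _) fun t ht => ?_
    have ht' : t ∈ Icc a b := hsub₂ (Icc_subset_uIcc ht)
    exact mul_le_mul_of_nonneg_right (hθ ⟨hat₀, ht₀b⟩ ht' ht.1) (hw0 t ht')
  rw [← integral_add_adjacent_intervals (hint hsub₁).2 (hint hsub₂).2,
    ← integral_add_adjacent_intervals (hint hsub₁).1 (hint hsub₂).1]
  linarith

theorem liminf_mul_integral_mul_le_of_antitoneOn {θ w n : ℝ → ℝ} {L t₀ : ℝ}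
    (hθ : AntitoneOn θ (Ici 0)) (hθ0 : ∀ t ∈ Ici 0, 0 ≤ θ t)
    (hw : ContinuousOn w (Ici 0)) (hw0 : ∀ t ∈ Ici 0, 0 ≤ w t)
    (hn : Tendsto n atTop (𝓝 0)) (hn0 : ∀ᶠ R in atTop, 0 ≤ n R)
    (hnw : Tendsto (fun R => n R * ∫ t in (0 : ℝ)..R, w t) atTop (𝓝 L)) (ht₀ : 0 ≤ t₀) :
    liminf (fun R => n R * ∫ t in (0 : ℝ)..R, θ t * w t) atTop ≤ θ t₀ * L := by
  set W₀ := ∫ t in (0 : ℝ)..t₀, w t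
  have hbound : Tendsto
      (fun R => n R * ((θ 0 - θ t₀) * W₀) + θ t₀ * (n R * ∫ t in (0 : ℝ)..R, w t))
      atTop (𝓝 (θ t₀ * L)) := by
    simpa using (hn.mul_const ((θ 0 - θ t₀) * W₀)).add (hnw.const_mul (θ t₀))
  have hle : ∀ᶠ R in atTop, n R * ∫ t in (0 : ℝ)..R, θ t * w t ≤
      n R * ((θ 0 - θ t₀) * W₀) + θ t₀ * (n R * ∫ t in (0 : ℝ)..R, w t) := by
    filter_upwards [hn0, eventually_ge_atTop t₀] with R hnR hR
    calc n R * ∫ t in (0 : ℝ)..R, θ t * w t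
        ≤ n R * ((θ 0 - θ t₀) * W₀ + θ t₀ * ∫ t in (0 : ℝ)..R, w t) :=
          mul_le_mul_of_nonneg_left (integral_mul_le_of_antitoneOn (hθ.mono Icc_subset_Ici_self)
            (hw.mono Icc_subset_Ici_self) (fun t ht => hw0 t ht.1) ht₀ hR) hnR
      _ = _ := by ring
  have hnonneg : ∀ᶠ R in atTop, 0 ≤ n R * ∫ t in (0 : ℝ)..R, θ t * w t := by
    filter_upwards [hn0, eventually_ge_atTop 0] with R hnR hR
    exact mul_nonneg hnR (integral_nonneg hR fun t ht => mul_nonneg (hθ0 t ht.1) (hw0 t ht.1))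
  rw [← hbound.liminf_eq]
  exact liminf_le_liminf hle ⟨0, hnonneg⟩ hbound.isBoundedUnder_le.isCoboundedUnder_ge

/-- Rigidity of the volume-element ratio: let `k > 1`, `H > 0`, and
`θ : [0,∞) → (0,∞)` nonincreasing, and set `A t = θ t * (1 + H*t/(k-1))^(k-1)`.
If `liminf_{R→∞} (k / R^k) * ∫₀^R A t dt ≥ θ 0 * (H/(k-1))^(k-1)`, then
`θ t = θ 0` for all `t ≥ 0`; equivalently,
`A t = θ 0 * (1 + H*t/(k-1))^(k-1)` for all `t ≥ 0`. -/
theorem volume_element_ratio_rigidity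
    (k H : ℝ) (hk : 1 < k) (hH : 0 < H)
    (θ : ℝ → ℝ) (hθpos : ∀ t : ℝ, 0 ≤ t → 0 < θ t)
    (hθanti : AntitoneOn θ (Set.Ici (0 : ℝ)))
    (hliminf : θ 0 * (H / (k - 1)) ^ (k - 1) ≤
      Filter.liminf
        (fun R : ℝ =>
          (k / R ^ k) * ∫ t in (0 : ℝ)..R, θ t * (1 + H * t / (k - 1)) ^ (k - 1))
        Filter.atTop) :
    (∀ t : ℝ, 0 ≤ t → θ t = θ 0) ∧
      (∀ t : ℝ, 0 ≤ t →
        θ t * (1 + H * t / (k - 1)) ^ (k - 1) =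
          θ 0 * (1 + H * t / (k - 1)) ^ (k - 1)) := by
  set c := H / (k - 1)
  have hc : 0 < c := div_pos hH (by linarith)
  have hk0 : 0 < k := by linarith
  have hbase : ∀ t ∈ Ici (0 : ℝ), 0 < 1 + c * t := fun t ht => by
    have := mul_nonneg hc.le ht; linarith
  have hw : ContinuousOn (fun t => (1 + c * t) ^ (k - 1)) (Ici 0) :=
    (continuousOn_const.add (continuousOn_const.mul continuousOn_id)).rpow_const
      fun t ht => Or.inl (hbase t ht).ne'
  have hn0 : ∀ᶠ R : ℝ in atTop, 0 ≤ k / R ^ k :=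
    (eventually_ge_atTop 0).mono fun R hR => div_nonneg hk0.le (Real.rpow_nonneg hR k)
  simp only [mul_div_right_comm H _ (k - 1)] at hliminf
  have hconst : ∀ t, 0 ≤ t → θ t = θ 0 := by
    intro t ht
    have hle : θ 0 * c ^ (k - 1) ≤ θ t * c ^ (k - 1) :=
      hliminf.trans <| liminf_mul_integral_mul_le_of_antitoneOn hθanti
        (fun t ht => (hθpos t ht).le) hw (fun t ht => Real.rpow_nonneg (hbase t ht).le _)
        ((tendsto_rpow_atTop hk0).const_div_atTop k) hn0
        (tendsto_div_rpow_mul_integral_one_add_mul_rpow hc hk0) ht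
    exact le_antisymm (hθanti self_mem_Ici ht ht)
      (le_of_mul_le_mul_right hle (Real.rpow_pos_of_pos hc _))
  exact ⟨hconst, fun t ht => by rw [hconst t ht]⟩
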